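/- arXiv:2304.12110 — 2 statements merged into one kernel-verified Lean document; each statement's English description precedes it below -/
import Mathlib

section
/- Let E be a finite set, p ∈ [0,1], and let ν be the product measure on {0,1}^E × M which is Bernoulli(p) on each coordinate of E and ρ on M. Fix an exploration of E, a step k, and an exploration history (e,x) of positive probability. Then the conditional law ν[· | Expl_k(e,x)] equals the product measure that deterministically assigns value x_{e_j} to coordinate e_j for each j ≤ k, is Bernoulli(p) on the remaining coordinates of E, and is ρ on M. -/
open MeasureTheory ProbabilityTheory
open scoped ENNReal Classical

noncomputable def bernB (p : ℝ≥0∞) : Measure Bool :=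
  (PMF.bernoulli (min p 1).toNNReal
    (by simpa using ENNReal.toNNReal_mono ENNReal.one_ne_top (min_le_right p 1))).toMeasure

noncomputable def prodBern (E : Type*) [Fintype E] (p : ℝ≥0∞) : Measure (E → Bool) :=
  Measure.pi fun _ => bernB p

structure Exploration (E : Type*) [Fintype E] where
  order : (E → Bool) → Fin (Fintype.card E) → E
  bij : ∀ ω, Function.Bijective (order ω)
  adapted : ∀ ω ω' (k : Fin (Fintype.card E)),
    (∀ j, j < k → order ω j = order ω' j ∧ ω (order ω j) = ω' (order ω j)) →
    order ω k = order ω' k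

def ExplEvent {E : Type*} [Fintype E] (expl : Exploration E) (k : ℕ)
    (e : Fin (Fintype.card E) → E) (x : E → Bool) : Set (E → Bool) :=
  {ω | ∀ j : Fin (Fintype.card E), (j : ℕ) < k → expl.order ω j = e j ∧ ω (e j) = x (e j)}

/-- The law of the coordinate `a` after conditioning on the exploration history `(e, x)` up to
step `k`: a Dirac mass at the revealed value for explored coordinates, Bernoulli `p`
otherwise. -/
noncomputable def stepMeasure {E : Type*} [Fintype E] (p : ℝ≥0∞) (k : ℕ)
    (e : Fin (Fintype.card E) → E) (x : E → Bool) (a : E) : Measure Bool :=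
  if ∃ j : Fin (Fintype.card E), (j : ℕ) < k ∧ e j = a then Measure.dirac (x a) else bernB p

instance {E : Type*} [Fintype E] (p : ℝ≥0∞) (k : ℕ) (e : Fin (Fintype.card E) → E)
    (x : E → Bool) (a : E) : IsProbabilityMeasure (stepMeasure p k e x a) := by
  unfold stepMeasure bernB; split <;> infer_instance


/-!
Adaptedness of the exploration makes `Expl_k(e,x)`, as soon as it is nonempty, the box of
configurations taking the values `x (e j)` at the explored coordinates `e j`, with no constraint
elsewhere. Conditioning a product measure on a box conditions each factor on its side, and a
Bernoulli law conditioned on a single value is the Dirac mass there.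
-/

section CondProduct

variable {α β : Type*} [MeasurableSpace α] [MeasurableSpace β]

lemma cond_prod_univ (μ : Measure α) [SFinite μ] (ν : Measure β) [IsProbabilityMeasure ν]
    (s : Set α) : (μ.prod ν)[|s ×ˢ Set.univ] = μ[|s].prod ν := by
  rw [ProbabilityTheory.cond, ProbabilityTheory.cond, Measure.prod_prod, measure_univ, mul_one,
    ← Measure.restrict_prod_eq_prod_univ, Measure.prod_smul_left]

lemma cond_singleton_eq_dirac [MeasurableSingletonClass α] (μ : Measure α) [IsFiniteMeasure μ]
    {a : α} (ha : μ {a} ≠ 0) : μ[|{a}] = Measure.dirac a := by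
  rw [ProbabilityTheory.cond, Measure.restrict_singleton, smul_smul,
    ENNReal.inv_mul_cancel ha (measure_ne_top _ _), one_smul]

lemma cond_pi_univ_pi {ι : Type*} [Fintype ι] {X : ι → Type*} [∀ i, MeasurableSpace (X i)]
    (μ : ∀ i, Measure (X i)) [∀ i, IsFiniteMeasure (μ i)] (s : ∀ i, Set (X i)) :
    (Measure.pi μ)[|Set.univ.pi s] = Measure.pi fun i => (μ i)[|s i] := by
  refine (Measure.pi_eq fun t ht => ?_).symm
  rw [cond_apply' (.univ_pi ht), ← Set.pi_inter_distrib, Measure.pi_pi, Measure.pi_pi,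
    ENNReal.prod_inv_distrib fun i _ j _ _ => .inr (measure_ne_top _ _), ← Finset.prod_mul_distrib]
  exact Finset.prod_congr rfl fun i _ => (cond_apply' (ht i) _).symm

end CondProduct

section Exploration

instance (p : ℝ≥0∞) : IsProbabilityMeasure (bernB p) := by
  unfold bernB; infer_instance

variable {E : Type*} [Fintype E]

def revealedSet (k : ℕ) (e : Fin (Fintype.card E) → E) (x : E → Bool) (a : E) : Set Bool :=
  if ∃ j : Fin (Fintype.card E), (j : ℕ) < k ∧ e j = a then {x a} else Set.univ

/-- By adaptedness, agreeing with `ω₀` on the values revealed so far forces the explored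
coordinates to agree too, one step at a time. -/
lemma mem_explEvent_iff {expl : Exploration E} {k : ℕ} {e : Fin (Fintype.card E) → E}
    {x : E → Bool} {ω₀ : E → Bool} (h₀ : ω₀ ∈ ExplEvent expl k e x) (ω : E → Bool) :
    ω ∈ ExplEvent expl k e x ↔ ∀ j : Fin (Fintype.card E), (j : ℕ) < k → ω (e j) = x (e j) := by
  refine ⟨fun hω j hj => (hω j hj).2, fun hval j hj => ⟨?_, hval j hj⟩⟩
  induction j using WellFoundedLT.induction with
  | _ j ih =>
    rw [expl.adapted ω ω₀ j fun i hij => ?_, (h₀ j hj).1]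
    have hik : (i : ℕ) < k := lt_trans hij hj
    have hi : expl.order ω i = e i := ih i hij hik
    refine ⟨hi.trans (h₀ i hik).1.symm, ?_⟩
    rw [hi, hval i hik, (h₀ i hik).2]

lemma explEvent_eq_pi (expl : Exploration E) (k : ℕ) (e : Fin (Fintype.card E) → E)
    (x : E → Bool) (hne : (ExplEvent expl k e x).Nonempty) :
    ExplEvent expl k e x = Set.univ.pi (revealedSet k e x) := by
  obtain ⟨ω₀, h₀⟩ := hne
  ext ω
  rw [mem_explEvent_iff h₀, Set.mem_univ_pi]
  constructor
  · intro hval a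
    unfold revealedSet
    split_ifs with hexpl
    · obtain ⟨j, hj, rfl⟩ := hexpl
      exact hval j hj
    · trivial
  · intro hω j hj
    simpa [revealedSet, show ∃ i : Fin (Fintype.card E), (i : ℕ) < k ∧ e i = e j from ⟨j, hj, rfl⟩]
      using hω (e j)

lemma cond_bernB_revealedSet {p : ℝ≥0∞} {k : ℕ} {e : Fin (Fintype.card E) → E} {x : E → Bool}
    {a : E} (h : bernB p (revealedSet k e x a) ≠ 0) :
    (bernB p)[|revealedSet k e x a] = stepMeasure p k e x a := by
  unfold revealedSet stepMeasure at *
  split_ifs at *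
  · exact cond_singleton_eq_dirac _ h
  · exact cond_univ _

end Exploration

theorem cond_explEvent_eq_prod_general {E : Type*} [Fintype E]
    {M : Type*} [MeasurableSpace M]
    (p : ℝ≥0∞) (ρ : Measure M) [IsProbabilityMeasure ρ]
    (ν : Measure ((E → Bool) × M)) (hν : ν = (prodBern E p).prod ρ)
    (expl : Exploration E)
    (k : ℕ) (e : Fin (Fintype.card E) → E) (x : E → Bool)
    (hpos : ν ((ExplEvent expl k e x) ×ˢ Set.univ) ≠ 0) :
    ν[|(ExplEvent expl k e x) ×ˢ Set.univ] = (Measure.pi (stepMeasure p k e x)).prod ρ := by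
  subst hν
  have hA : prodBern E p (ExplEvent expl k e x) ≠ 0 := by
    rwa [Measure.prod_prod, measure_univ, mul_one] at hpos
  have hbox := explEvent_eq_pi expl k e x (nonempty_of_measure_ne_zero hA)
  have hrevealed : ∀ a, bernB p (revealedSet k e x a) ≠ 0 := by
    rw [hbox, prodBern, Measure.pi_pi, Finset.prod_ne_zero_iff] at hA
    exact fun a => hA a (Finset.mem_univ a)
  rw [cond_prod_univ, hbox, prodBern, cond_pi_univ_pi]
  congr 2
  funext a
  exact cond_bernB_revealedSet (hrevealed a)

/-- Conditionally on the exploration history `Expl_k(e,x)`, the law of the configuration is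
the product measure assigning deterministically the value `x (e j)` to the coordinate `e j`
for `j ≤ k`, being Bernoulli `p` on the remaining coordinates of `E`, and `ρ` on `M`. -/
theorem cond_explEvent_eq_prod {E : Type*} [Fintype E]
    {M : Type*} [MeasurableSpace M]
    (p : ℝ≥0∞) (hp : p ≤ 1) (ρ : Measure M) [IsProbabilityMeasure ρ]
    (ν : Measure ((E → Bool) × M)) (hν : ν = (prodBern E p).prod ρ)
    (expl : Exploration E)
    (k : ℕ) (e : Fin (Fintype.card E) → E) (x : E → Bool)
    (hpos : ν ((ExplEvent expl k e x) ×ˢ Set.univ) ≠ 0) :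
    ν[|(ExplEvent expl k e x) ×ˢ Set.univ] = (Measure.pi (stepMeasure p k e x)).prod ρ :=
  cond_explEvent_eq_prod_general p ρ ν hν expl k e x hpos
end

section
/- Assume that for all p ∈ [0,1] and all h > 0, p(1 − m_h(p)) ≤ p_c. Then for every p ≥ p_c, the percolation probability satisfies μ_p[|C_o| = ∞] ≥ (p − p_c)/p (the mean-field lower bound). -/
open MeasureTheory ProbabilityTheory Filter
open scoped ENNReal

/-- The subgraph of open edges of `H` in the configuration `ω`. -/
def openSub {V : Type*} (H : SimpleGraph V) (ω : Sym2 V → Bool) : SimpleGraph V where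
  Adj a b := H.Adj a b ∧ ω s(a, b) = true
  symm := by
    constructor
    intro a b h
    refine ⟨h.1.symm, ?_⟩
    rw [Sym2.eq_swap]; exact h.2
  loopless := ⟨fun a h => H.irrefl h.1⟩

/-- The open cluster `C_o` of the vertex `o` in the configuration `ω`. -/
def cluster {V : Type*} (H : SimpleGraph V) (o : V) (ω : Sym2 V → Bool) : Set V :=
  {v | (openSub H ω).Reachable o v}

/-- The open cluster of `o` contains at least `n` vertices (`|C_o| ≥ n`). -/
def clusterAtLeast {V : Type*} (H : SimpleGraph V) (o : V) (n : ℕ) (ω : Sym2 V → Bool) : Prop :=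
  ∃ s : Finset V, ↑s ⊆ cluster H o ω ∧ n ≤ s.card

/-- `μ` is the Bernoulli product measure of parameter `p` on `{0,1}^ι`, characterized by
being a probability measure giving the correct product probabilities to all cylinders. -/
def IsBernoulliProduct {ι : Type*} (p : ℝ) (μ : Measure (ι → Bool)) : Prop :=
  IsProbabilityMeasure μ ∧
    ∀ (s : Finset ι) (x : ι → Bool),
      μ {ω | ∀ i ∈ s, ω i = x i} =
        ∏ i ∈ s, (if x i then ENNReal.ofReal p else ENNReal.ofReal (1 - p))

/-- The magnetization: the probability that the cluster of `o` contains a green vertex. -/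
noncomputable def mag {V : Type*} (H : SimpleGraph V) (o : V)
    (μe : Measure (Sym2 V → Bool)) (γv : Measure (V → Bool)) : ℝ :=
  ((μe.prod γv) {z | ∃ v ∈ cluster H o z.1, z.2 v = true}).toReal

/-- `ψ_n`: the probability that the cluster of `o` has at least `n` vertices. -/
noncomputable def psiVol {V : Type*} (H : SimpleGraph V) (o : V) (n : ℕ)
    (μe : Measure (Sym2 V → Bool)) : ℝ :=
  (μe {ω | clusterAtLeast H o n ω}).toReal

/-- `θ(p)`: the probability that the cluster of `o` is infinite. -/
noncomputable def theta {V : Type*} (H : SimpleGraph V) (o : V)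
    (μe : Measure (Sym2 V → Bool)) : ℝ :=
  (μe {ω | (cluster H o ω).Infinite}).toReal

/-- The critical parameter `p_c = inf {p ∈ [0,1] : μ_p[|C_o| = ∞] > 0}`. -/
noncomputable def pCrit {V : Type*} (H : SimpleGraph V) (o : V)
    (μ : ℝ → Measure (Sym2 V → Bool)) : ℝ :=
  sInf {p | p ∈ Set.Icc (0:ℝ) 1 ∧ 0 < theta H o (μ p)}

open Topology

/-!
If the cluster of `o` contains a green vertex, then either `|C_o| ≥ n` or one of the finitely
many vertices at distance `< n` from `o` is green, so `m_h(p) ≤ ψ_n(p) + |B_n| (1 - e^{-h})`.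
The hypothesis gives `(p - p_c)/p ≤ m_h(p)`; letting `h ↓ 0` yields `(p - p_c)/p ≤ ψ_n(p)`,
and `ψ_n(p) ↓ θ(p)` by continuity from above.
-/

lemma openSub_le {V : Type*} (H : SimpleGraph V) (ω : Sym2 V → Bool) : openSub H ω ≤ H :=
  fun _ _ h => h.1

lemma mem_cluster_iff_exists_walk {V : Type*} (H : SimpleGraph V) (o v : V)
    (ω : Sym2 V → Bool) :
    v ∈ cluster H o ω ↔ ∃ W : H.Walk o v, ∀ e ∈ W.edges, ω e = true := by
  constructor
  · rintro ⟨q⟩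
    refine ⟨q.transfer H fun e he =>
      SimpleGraph.edgeSet_mono (openSub_le H ω) (q.edges_subset_edgeSet he), fun e he => ?_⟩
    rw [q.edges_transfer] at he
    induction e using Sym2.ind with
    | _ a b => exact ((SimpleGraph.mem_edgeSet _).mp (q.edges_subset_edgeSet he)).2
  · rintro ⟨W, hW⟩
    refine (W.transfer (openSub H ω) fun e he => ?_).reachable
    induction e using Sym2.ind with
    | _ a b => exact (SimpleGraph.mem_edgeSet _).mpr ⟨W.adj_of_mem_edges he, hW _ he⟩

lemma SimpleGraph.finite_setOf_walk_length_lt {V : Type*} {G : SimpleGraph V}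
    (hG : ∀ v : V, (G.neighborSet v).Finite) (o : V) (n : ℕ) :
    {v : V | ∃ w : G.Walk v o, w.length < n}.Finite := by
  induction n with
  | zero => simp
  | succ n ih =>
    refine ((ih.biUnion fun u _ => hG u).insert o).subset ?_
    rintro v ⟨w, hw⟩
    cases w with
    | nil => exact Set.mem_insert _ _
    | cons h w' =>
      exact Or.inr (Set.mem_biUnion ⟨w', by simpa using hw⟩ h.symm)

lemma SimpleGraph.Connected.countable_of_finite_neighborSet {V : Type*} {G : SimpleGraph V}
    (hconn : G.Connected) (hG : ∀ v : V, (G.neighborSet v).Finite) : Countable V := by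
  obtain ⟨o⟩ := hconn.nonempty
  rw [← Set.countable_univ_iff]
  refine (Set.countable_iUnion fun n => (G.finite_setOf_walk_length_lt hG o n).countable).mono
    fun v _ => ?_
  obtain ⟨w⟩ := hconn.preconnected v o
  exact Set.mem_iUnion.mpr ⟨w.length + 1, w, Nat.lt_succ_self _⟩

lemma cluster_subset_of_not_clusterAtLeast {V : Type*} {H : SimpleGraph V} {o : V} {n : ℕ}
    {ω : Sym2 V → Bool} (h : ¬ clusterAtLeast H o n ω) :
    cluster H o ω ⊆ {v : V | ∃ w : H.Walk v o, w.length < n} := by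
  classical
  rintro v ⟨q⟩
  set P := q.bypass
  have hP : P.IsPath := q.bypass_isPath
  have hsub : ↑P.support.toFinset ⊆ cluster H o ω := fun u hu =>
    (P.takeUntil u (by simpa using hu)).reachable
  have hcard : P.support.toFinset.card < n := lt_of_not_ge fun hc => h ⟨_, hsub, hc⟩
  rw [List.toFinset_card_of_nodup hP.support_nodup,
    SimpleGraph.Walk.length_support] at hcard
  refine ⟨P.reverse.transfer H fun e he =>
    SimpleGraph.edgeSet_mono (openSub_le H ω) (P.reverse.edges_subset_edgeSet he), ?_⟩
  rw [SimpleGraph.Walk.length_transfer, SimpleGraph.Walk.length_reverse]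
  omega

lemma cluster_infinite_iff_forall_clusterAtLeast {V : Type*} (H : SimpleGraph V) (o : V)
    (ω : Sym2 V → Bool) : (cluster H o ω).Infinite ↔ ∀ n, clusterAtLeast H o n ω := by
  classical
  refine ⟨fun hi n => ?_, fun hn hf => ?_⟩
  · obtain ⟨t, ht, hcard⟩ := hi.exists_subset_card_eq n
    exact ⟨t, ht, hcard.ge⟩
  · obtain ⟨s, hs, hcard⟩ := hn (hf.toFinset.card + 1)
    have := Finset.card_le_card fun v hv => hf.mem_toFinset.mpr (hs hv)
    omega

lemma antitone_clusterAtLeast {V : Type*} (H : SimpleGraph V) (o : V) :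
    Antitone fun n => {ω : Sym2 V → Bool | clusterAtLeast H o n ω} :=
  fun _ _ hmn _ ⟨s, hs, hcard⟩ => ⟨s, hs, hmn.trans hcard⟩

section Measurability

variable {V : Type*} [Countable V] (H : SimpleGraph V) (o : V)

/-- The event `v ∈ C_o` is the union, over the countably many edge lists of walks from `o`
to `v`, of the event that all these edges are open. -/
lemma measurableSet_mem_cluster (v : V) :
    MeasurableSet {ω : Sym2 V → Bool | v ∈ cluster H o ω} := by
  have : {ω : Sym2 V → Bool | v ∈ cluster H o ω} =
      ⋃ (l : List (Sym2 V)) (_ : ∃ W : H.Walk o v, W.edges = l), ⋂ e ∈ l, {ω | ω e = true} := by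
    ext ω
    simp only [Set.mem_ofPred_eq, Set.mem_iUnion, Set.mem_iInter, mem_cluster_iff_exists_walk]
    constructor
    · rintro ⟨W, hW⟩; exact ⟨W.edges, ⟨W, rfl⟩, hW⟩
    · rintro ⟨l, ⟨W, rfl⟩, hl⟩; exact ⟨W, hl⟩
  rw [this]
  exact .iUnion fun l => .iUnion fun _ => .biInter l.finite_toSet.countable fun e _ =>
    measurableSet_eq_fun (measurable_pi_apply e) measurable_const

lemma measurableSet_clusterAtLeast (n : ℕ) :
    MeasurableSet {ω : Sym2 V → Bool | clusterAtLeast H o n ω} := by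
  have : {ω : Sym2 V → Bool | clusterAtLeast H o n ω} =
      ⋃ (s : Finset V) (_ : n ≤ s.card), ⋂ v ∈ s, {ω | v ∈ cluster H o ω} := by
    ext ω
    simp only [Set.mem_ofPred_eq, Set.mem_iUnion, Set.mem_iInter, clusterAtLeast]
    exact ⟨fun ⟨s, hs, hcard⟩ => ⟨s, hcard, fun v hv => hs hv⟩,
      fun ⟨s, hcard, hs⟩ => ⟨s, fun v hv => hs v hv, hcard⟩⟩
  rw [this]
  exact .iUnion fun s => .iUnion fun _ =>
    .biInter s.countable_toSet fun v _ => measurableSet_mem_cluster H o v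

lemma tendsto_psiVol_theta (μe : Measure (Sym2 V → Bool)) [IsFiniteMeasure μe] :
    Tendsto (fun n => psiVol H o n μe) atTop (𝓝 (theta H o μe)) := by
  have hInter : {ω : Sym2 V → Bool | (cluster H o ω).Infinite} =
      ⋂ n, {ω | clusterAtLeast H o n ω} := by
    ext ω
    simp only [Set.mem_ofPred_eq, Set.mem_iInter, cluster_infinite_iff_forall_clusterAtLeast]
  rw [theta, hInter]
  exact (ENNReal.tendsto_toReal (measure_ne_top _ _)).comp <|
    tendsto_measure_iInter_atTop (fun n => (measurableSet_clusterAtLeast H o n).nullMeasurableSet)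
      (antitone_clusterAtLeast H o) ⟨0, measure_ne_top _ _⟩

end Measurability

lemma IsBernoulliProduct.measure_eq_true {ι : Type*} {q : ℝ} {γ : Measure (ι → Bool)}
    (hγ : IsBernoulliProduct q γ) (i : ι) : γ {g | g i = true} = ENNReal.ofReal q := by
  simpa using hγ.2 {i} fun _ => true

lemma mag_le_psiVol_add {V : Type*} (H : SimpleGraph V) (o : V) (n : ℕ)
    (μe : Measure (Sym2 V → Bool)) [IsProbabilityMeasure μe] {q : ℝ} (hq : 0 ≤ q)
    {γ : Measure (V → Bool)} (hγ : IsBernoulliProduct q γ) (B : Finset V)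
    (hB : ∀ ω, ¬ clusterAtLeast H o n ω → cluster H o ω ⊆ B) :
    mag H o μe γ ≤ psiVol H o n μe + B.card * q := by
  have := hγ.1
  have hsub : {z : (Sym2 V → Bool) × (V → Bool) | ∃ v ∈ cluster H o z.1, z.2 v = true} ⊆
      {ω | clusterAtLeast H o n ω} ×ˢ Set.univ ∪
        Set.univ ×ˢ ⋃ v ∈ B, {g : V → Bool | g v = true} := by
    rintro ⟨ω, g⟩ ⟨v, hv, hg⟩
    by_cases hcl : clusterAtLeast H o n ω
    · exact Or.inl ⟨hcl, trivial⟩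
    · exact Or.inr ⟨trivial, Set.mem_biUnion (hB ω hcl hv) hg⟩
  have hbound : μe.prod γ {z | ∃ v ∈ cluster H o z.1, z.2 v = true} ≤
      μe {ω | clusterAtLeast H o n ω} + B.card * ENNReal.ofReal q :=
    calc _ ≤ μe.prod γ ({ω | clusterAtLeast H o n ω} ×ˢ Set.univ) +
          μe.prod γ (Set.univ ×ˢ ⋃ v ∈ B, {g : V → Bool | g v = true}) :=
          (measure_mono hsub).trans (measure_union_le _ _)
      _ = μe {ω | clusterAtLeast H o n ω} + γ (⋃ v ∈ B, {g : V → Bool | g v = true}) := by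
          simp only [Measure.prod_prod, measure_univ, mul_one, one_mul]
      _ ≤ μe {ω | clusterAtLeast H o n ω} + ∑ v ∈ B, γ {g : V → Bool | g v = true} := by
          gcongr; exact measure_biUnion_finset_le _ _
      _ = _ := by simp [hγ.measure_eq_true]
  refine ENNReal.toReal_le_of_le_ofReal (by unfold psiVol; positivity) (hbound.trans_eq ?_)
  rw [psiVol, ENNReal.ofReal_add ENNReal.toReal_nonneg (by positivity),
    ENNReal.ofReal_toReal (measure_ne_top _ _), ENNReal.ofReal_mul (Nat.cast_nonneg _),
    ENNReal.ofReal_natCast]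

lemma le_psiVol_of_forall_le_mag {V : Type*} {H : SimpleGraph V}
    (hlocfin : ∀ v : V, (H.neighborSet v).Finite) (o : V) (n : ℕ)
    (μe : Measure (Sym2 V → Bool)) [IsProbabilityMeasure μe] {γ : ℝ → Measure (V → Bool)}
    (hγ : ∀ h : ℝ, 0 < h → IsBernoulliProduct (1 - Real.exp (-h)) (γ h)) {a : ℝ}
    (ha : ∀ h : ℝ, 0 < h → a ≤ mag H o μe (γ h)) : a ≤ psiVol H o n μe := by
  set B := (H.finite_setOf_walk_length_lt hlocfin o n).toFinset
  have hlim : Tendsto (fun h => psiVol H o n μe + B.card * (1 - Real.exp (-h)))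
      (𝓝[>] 0) (𝓝 (psiVol H o n μe)) := by
    have hcont : Continuous fun h => psiVol H o n μe + B.card * (1 - Real.exp (-h)) := by
      fun_prop
    simpa using (hcont.tendsto 0).mono_left nhdsWithin_le_nhds
  refine ge_of_tendsto hlim (eventually_nhdsWithin_of_forall fun h (hh : 0 < h) => ?_)
  refine (ha h hh).trans (mag_le_psiVol_add H o n μe ?_ (hγ h hh) B fun ω hω v hv => ?_)
  · simpa using Real.exp_le_one_iff.mpr (neg_nonpos.mpr hh.le)
  · simpa [B] using cluster_subset_of_not_clusterAtLeast hω hv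

theorem mean_field_lower_bound_general {V : Type*} (H : SimpleGraph V) (o : V)
    (hconn : H.Connected)
    (hlocfin : ∀ v : V, (H.neighborSet v).Finite)
    (μ : ℝ → Measure (Sym2 V → Bool)) (hμ : ∀ p ∈ Set.Icc (0:ℝ) 1, IsBernoulliProduct p (μ p))
    (γ : ℝ → Measure (V → Bool))
    (hγ : ∀ h : ℝ, 0 < h → IsBernoulliProduct (1 - Real.exp (-h)) (γ h))
    (hkey : ∀ p ∈ Set.Icc (0:ℝ) 1, ∀ h : ℝ, 0 < h →
      p * (1 - mag H o (μ p) (γ h)) ≤ pCrit H o μ) :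
    ∀ p : ℝ, pCrit H o μ ≤ p → p ≤ 1 →
      (p - pCrit H o μ) / p ≤ theta H o (μ p) := by
  intro p hpc hp1
  have hpc0 : 0 ≤ pCrit H o μ := Real.sInf_nonneg fun _ hx => hx.1.1
  rcases (hpc0.trans hpc).eq_or_lt with rfl | hp0
  · rw [div_zero]
    exact ENNReal.toReal_nonneg
  have hp : p ∈ Set.Icc (0:ℝ) 1 := ⟨hp0.le, hp1⟩
  have := (hμ p hp).1
  have := hconn.countable_of_finite_neighborSet hlocfin
  refine ge_of_tendsto' (tendsto_psiVol_theta H o (μ p)) fun n =>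
    le_psiVol_of_forall_le_mag hlocfin o n (μ p) hγ fun h hh => ?_
  rw [div_le_iff₀ hp0]
  linarith [hkey p hp h hh]

/-- The mean-field lower bound: if `p(1 - m_h(p)) ≤ p_c` for all `p` and `h > 0`, then for
every `p ≥ p_c`, `μ_p[|C_o| = ∞] ≥ (p - p_c)/p`. -/
theorem mean_field_lower_bound {V : Type*} (H : SimpleGraph V) (o : V)
    (hconn : H.Connected) (hinf : Infinite V)
    (hlocfin : ∀ v : V, (H.neighborSet v).Finite)
    (htrans : ∀ u v : V, ∃ φ : H ≃g H, φ u = v)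
    (μ : ℝ → Measure (Sym2 V → Bool)) (hμ : ∀ p ∈ Set.Icc (0:ℝ) 1, IsBernoulliProduct p (μ p))
    (γ : ℝ → Measure (V → Bool))
    (hγ : ∀ h : ℝ, 0 < h → IsBernoulliProduct (1 - Real.exp (-h)) (γ h))
    (hkey : ∀ p ∈ Set.Icc (0:ℝ) 1, ∀ h : ℝ, 0 < h →
      p * (1 - mag H o (μ p) (γ h)) ≤ pCrit H o μ) :
    ∀ p : ℝ, pCrit H o μ ≤ p → p ≤ 1 →
      (p - pCrit H o μ) / p ≤ theta H o (μ p) :=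
  mean_field_lower_bound_general H o hconn hlocfin μ hμ γ hγ hkey
end
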